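/- arXiv:1503.00308 — 2 statements merged into one kernel-verified Lean document; each statement's English description precedes it below -/
import Mathlib

section
/- Let M be a finitely generated multiplication R-module. If N is a 2-absorbing primary submodule of M, then (N :_R M) is a 2-absorbing primary ideal of R. -/
open Submodule

variable {R : Type*} [CommRing R] {M : Type*} [AddCommGroup M] [Module R M]

/-- A prime submodule: proper, and `a • m ∈ P` implies `m ∈ P` or `a • ⊤ ≤ P`. -/
def IsPrimeSubmodule (P : Submodule R M) : Prop :=
  P ≠ ⊤ ∧ ∀ (a : R) (m : M), a • m ∈ P → m ∈ P ∨ a ∈ P.colon ⊤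

/-- The `M`-radical of `N`: intersection of prime submodules containing `N`
(equal to `⊤` when there are none). -/
def mRad (N : Submodule R M) : Submodule R M :=
  sInf {P : Submodule R M | IsPrimeSubmodule P ∧ N ≤ P}

/-- 2-absorbing primary submodule. -/
def Is2AbsorbingPrimary (N : Submodule R M) : Prop :=
  N ≠ ⊤ ∧ ∀ (a b : R) (m : M), (a * b) • m ∈ N →
    a • m ∈ mRad N ∨ b • m ∈ mRad N ∨ a * b ∈ N.colon ⊤

/-- Multiplication module: every submodule is `I • ⊤` for some ideal `I`. -/
def IsMultiplicationModule (R M : Type*) [CommRing R] [AddCommGroup M] [Module R M] : Prop :=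
  ∀ N : Submodule R M, ∃ I : Ideal R, N = I • (⊤ : Submodule R M)

/-- Primary submodule. -/
def IsPrimarySubmodule (P : Submodule R M) : Prop :=
  P ≠ ⊤ ∧ ∀ (a : R) (m : M), a • m ∈ P → m ∈ P ∨ a ∈ (P.colon ⊤).radical

/-- 2-absorbing primary ideal. -/
def Is2AbsorbingPrimaryIdeal {R : Type*} [CommRing R] (I : Ideal R) : Prop :=
  I ≠ ⊤ ∧ ∀ a b c : R, a * b * c ∈ I → a * b ∈ I ∨ a * c ∈ I.radical ∨ b * c ∈ I.radical

/-- 2-absorbing submodule. -/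
def Is2AbsorbingSubmodule (K : Submodule R M) : Prop :=
  K ≠ ⊤ ∧ ∀ (a b : R) (m : M), (a * b) • m ∈ K →
    a * b ∈ K.colon ⊤ ∨ a • m ∈ K ∨ b • m ∈ K

/-!
Let `p` be a prime containing `(N :_R M)`. Since `M` is a multiplication module,
`N = (N :_R M) M ≤ p M`, and `p M` is a prime submodule; so `M-rad(N) ≤ p M`. The determinant
trick shows `(p M :_R M) ≤ p` when `M` is finitely generated, hence
`(M-rad(N) :_R M) ≤ √(N :_R M)`. Now if `abc ∈ (N :_R M)` and `ab ∉ (N :_R M)`, every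
`m : M` has `ac • m` or `bc • m` in `M-rad(N)`; a module is never the union of two proper
submodules, so `ac` or `bc` lies in `(M-rad(N) :_R M) ≤ √(N :_R M)`.
-/

lemma Polynomial.Monic.pow_natDegree_mem_of_eval_mem {p : Ideal R} {q : Polynomial R}
    (hq : q.Monic) (hcoeff : ∀ i < q.natDegree, q.coeff i ∈ p) {x : R} (hx : q.eval x ∈ p) :
    x ^ q.natDegree ∈ p := by
  have hlow : ∑ i ∈ Finset.range q.natDegree, q.coeff i * x ^ i ∈ p :=
    Ideal.sum_mem _ fun i hi => Ideal.mul_mem_right _ _ (hcoeff i (Finset.mem_range.1 hi))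
  rw [hq.as_sum] at hx
  simpa [Polynomial.eval_finsetSum] using p.sub_mem hx hlow

/-- Determinant trick: Cayley–Hamilton for `x • id`, whose range lies in `p • ⊤`, puts a power
of `x` in `p + ann M`. -/
lemma Ideal.IsPrime.colon_smul_top_le [Module.Finite R M] {p : Ideal R} (hp : p.IsPrime)
    (hann : Module.annihilator R M ≤ p) :
    (p • ⊤ : Submodule R M).colon ⊤ ≤ p := by
  intro x hx
  obtain ⟨q, hq, -, hcoeff, hqx⟩ :=
    LinearMap.exists_monic_and_natDegree_eq_and_coeff_mem_pow_and_aeval_eq_zero R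
      (algebraMap R (Module.End R M) x) p (by
        rintro _ ⟨m, rfl⟩
        exact mem_colon.1 hx m trivial)
  rw [Polynomial.aeval_algebraMap_apply_eq_algebraMap_eval] at hqx
  have hqx_ann : q.eval x ∈ Module.annihilator R M :=
    Module.mem_annihilator.2 fun m => by
      simpa [Module.algebraMap_end_apply] using congrArg (· m) hqx
  have hlow : ∀ i < q.natDegree, q.coeff i ∈ p := fun i hi =>
    Ideal.pow_le_self (Nat.sub_ne_zero_of_lt hi) (hcoeff i)
  exact hp.mem_of_pow_mem q.natDegree (hq.pow_natDegree_mem_of_eval_mem hlow (hann hqx_ann))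

lemma IsMultiplicationModule.eq_colon_smul_top (hM : IsMultiplicationModule R M)
    (N : Submodule R M) : N = N.colon ⊤ • ⊤ := by
  obtain ⟨I, hI⟩ := hM N
  refine le_antisymm ?_ (Submodule.smul_le.2 fun r hr m _ => mem_colon.1 hr m trivial)
  conv_lhs => rw [hI]
  refine Submodule.smul_mono_left fun i hi => mem_colon.2 fun m _ => ?_
  rw [hI]
  exact Submodule.smul_mem_smul hi Submodule.mem_top

lemma IsMultiplicationModule.isPrimeSubmodule_smul_top [Module.Finite R M]
    (hM : IsMultiplicationModule R M) {p : Ideal R} (hp : p.IsPrime)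
    (hann : Module.annihilator R M ≤ p) : IsPrimeSubmodule (p • ⊤ : Submodule R M) := by
  refine ⟨fun htop => hp.ne_top ?_, fun a m ham => or_iff_not_imp_right.2 fun ha => ?_⟩
  · rw [Ideal.eq_top_iff_one]
    exact hp.colon_smul_top_le hann (by simp [htop])
  · have hap : a ∉ p := fun hap =>
      ha (mem_colon.2 fun m' _ => Submodule.smul_mem_smul hap trivial)
    have hspan := hM.eq_colon_smul_top (Submodule.span R {m})
    have hcolon : (Submodule.span R {m}).colon ⊤ ≤ p := fun i hi => by
      have hai : a * i ∈ (p • ⊤ : Submodule R M).colon ⊤ := mem_colon.2 fun m' _ => by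
        obtain ⟨c, hc⟩ := Submodule.mem_span_singleton.1 (mem_colon.1 hi m' trivial)
        rw [mul_smul, ← hc, smul_comm]
        exact Submodule.smul_mem _ c ham
      exact (hp.mem_or_mem (hp.colon_smul_top_le hann hai)).resolve_left hap
    exact Submodule.smul_mono_left hcolon (hspan ▸ Submodule.mem_span_singleton_self m)

lemma mRad_colon_le_radical_colon [Module.Finite R M] (hM : IsMultiplicationModule R M)
    (N : Submodule R M) : (mRad N).colon ⊤ ≤ (N.colon ⊤).radical := by
  rw [Ideal.radical_eq_sInf]
  refine le_sInf fun p ⟨hNp, hp⟩ => ?_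
  have hann : Module.annihilator R M ≤ p := fun r hr =>
    hNp (mem_colon.2 fun m _ => by simp [Module.mem_annihilator.1 hr m])
  have hrad : mRad N ≤ p • ⊤ :=
    sInf_le ⟨hM.isPrimeSubmodule_smul_top hp hann,
      (hM.eq_colon_smul_top N).trans_le (Submodule.smul_mono_left hNp)⟩
  exact (Submodule.colon_mono hrad le_rfl).trans (hp.colon_smul_top_le hann)

lemma Submodule.mem_colon_top_or_mem_colon_top {K : Submodule R M} {r s : R}
    (h : ∀ m : M, r • m ∈ K ∨ s • m ∈ K) : r ∈ K.colon ⊤ ∨ s ∈ K.colon ⊤ := by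
  have hcover : ((⊤ : Submodule R M) : Set M) ⊆
      K.comap (r • LinearMap.id) ∪ K.comap (s • LinearMap.id) := fun m _ => h m
  simpa [Submodule.mem_colon, SetLike.le_def] using AddSubgroupClass.subset_union.1 hcover

theorem stmt5 [Module.Finite R M] (hM : IsMultiplicationModule R M)
    (N : Submodule R M) (hN : Is2AbsorbingPrimary N) :
    Is2AbsorbingPrimaryIdeal (N.colon ⊤) := by
  refine ⟨fun h => hN.1 ?_, fun a b c habc => or_iff_not_imp_left.2 fun hab => ?_⟩
  · rw [← Submodule.coe_eq_univ, ← Set.univ_subset_iff]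
    exact (Submodule.colon_eq_top_iff_subset _).1 h
  have hcover : ∀ m : M, (a * c) • m ∈ mRad N ∨ (b * c) • m ∈ mRad N := fun m => by
    have habcm : (a * b) • c • m ∈ N := by
      rw [smul_smul]; exact mem_colon.1 habc m trivial
    simpa only [smul_smul, hab, or_false] using hN.2 a b (c • m) habcm
  exact (Submodule.mem_colon_top_or_mem_colon_top hcover).imp
    (mRad_colon_le_radical_colon hM N ·) (mRad_colon_le_radical_colon hM N ·)
end

section
/- Let M be a finitely generated multiplication R-module. If N is a 2-absorbing primary submodule of M, then M-rad(N) is a 2-absorbing submodule of M. -/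
open Submodule

variable {R : Type*} [CommRing R] {M : Type*} [AddCommGroup M] [Module R M]

/-!
Write `(K : M)` for `K.colon ⊤`. In a finitely generated multiplication module every submodule
`K` equals `(K : M) • ⊤`, and `(I • ⊤ : M) = I` for a radical ideal `I ⊇ ann M`, because
`(I • ⊤ : M)` and `ann M ⊔ I` both cut out `Supp (M ⧸ I • ⊤) = Supp M ∩ V(I)`. The prime
submodules are then the proper `p • ⊤` with `p` prime over `ann M`, so `M-rad(N) = √(N : M) • ⊤`.
The condition on `N` descends to the ideal `(N : M)`, whose radical `Q` is 2-absorbing; and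
`Q • ⊤` is a 2-absorbing submodule because `(a * b) • m ∈ Q • ⊤` means `a * b * (Rm : M) ⊆ Q`,
and an ideal covered by the two ideals `(Q : a)`, `(Q : b)` lies in one of them.
-/

open PrimeSpectrum

namespace Submodule

theorem annihilator_le_colon (N : Submodule R M) : Module.annihilator R M ≤ N.colon ⊤ :=
  fun r hr => mem_colon.2 fun x _ => by rw [Module.mem_annihilator.1 hr x]; exact N.zero_mem

theorem colon_ne_top {N : Submodule R M} (hN : N ≠ ⊤) : N.colon ⊤ ≠ ⊤ :=
  fun h => hN (eq_top_iff.2 fun _ _ => (colon_eq_top_iff_subset _).1 h trivial)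

theorem annihilator_le_radical_colon (N : Submodule R M) :
    Module.annihilator R M ≤ (N.colon ⊤).radical :=
  (annihilator_le_colon N).trans Ideal.le_radical

theorem colon_smul_top_le (N : Submodule R M) : (N.colon ⊤ • ⊤ : Submodule R M) ≤ N :=
  smul_le.2 fun _ hr x _ => mem_colon.1 hr x trivial

theorem le_colon_smul_top (I : Ideal R) : I ≤ (I • ⊤ : Submodule R M).colon ⊤ :=
  fun _ hr => mem_colon.2 fun _ _ => smul_mem_smul hr mem_top

theorem radical_colon_smul_top [Module.Finite R M] (I : Ideal R) :
    ((I • ⊤ : Submodule R M).colon ⊤).radical = (Module.annihilator R M ⊔ I).radical := by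
  rw [← zeroLocus_eq_iff, zeroLocus_sup, ← Module.support_eq_zeroLocus,
    ← Module.support_quotient, Module.support_eq_zeroLocus, annihilator_quotient]
  rfl

theorem colon_smul_top_eq [Module.Finite R M] {I : Ideal R} (hI : I.IsRadical)
    (hann : Module.annihilator R M ≤ I) : (I • ⊤ : Submodule R M).colon ⊤ = I := by
  refine le_antisymm ?_ (le_colon_smul_top I)
  calc (I • ⊤ : Submodule R M).colon ⊤ ≤ ((I • ⊤ : Submodule R M).colon ⊤).radical :=
        Ideal.le_radical
    _ = I := by rw [radical_colon_smul_top, sup_eq_right.2 hann, hI.radical]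

theorem mul_mem_colon_span_smul {m : M} {k : R} (hk : k ∈ (span R {m}).colon ⊤) (a : R) :
    a * k ∈ (span R {a • m}).colon ⊤ := by
  refine mem_colon.2 fun x _ => ?_
  obtain ⟨r, hr⟩ := mem_span_singleton.1 (mem_colon.1 hk x trivial)
  rw [mul_smul, ← hr, smul_comm]
  exact smul_mem _ r (mem_span_singleton_self _)

theorem mem_colon_or_mem_colon {P L : Submodule R M} {a b : R}
    (h : ∀ x ∈ L, a • x ∈ P ∨ b • x ∈ P) : a ∈ P.colon L ∨ b ∈ P.colon L := by
  have hcover : (L : Set M) ⊆ P.comap (a • LinearMap.id) ∪ P.comap (b • LinearMap.id) := h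
  exact (AddSubgroupClass.subset_union.1 hcover).imp
    (fun hL => mem_colon.2 fun x hx => hL hx) (fun hL => mem_colon.2 fun x hx => hL hx)

end Submodule

theorem IsPrimeSubmodule.isPrime_colon {P : Submodule R M} (hP : IsPrimeSubmodule P) :
    (P.colon ⊤).IsPrime := by
  refine ⟨colon_ne_top hP.1, fun {a b} hab =>
    or_iff_not_imp_left.2 fun ha => mem_colon.2 fun x _ => ?_⟩
  exact (hP.2 a (b • x) (smul_smul a b x ▸ mem_colon.1 hab x trivial)).resolve_right ha

def Is2AbsorbingIdeal (I : Ideal R) : Prop :=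
  I ≠ ⊤ ∧ ∀ a b c : R, a * b * c ∈ I → a * b ∈ I ∨ a * c ∈ I ∨ b * c ∈ I

theorem Is2AbsorbingPrimaryIdeal.is2AbsorbingIdeal_radical {I : Ideal R}
    (hI : Is2AbsorbingPrimaryIdeal I) : Is2AbsorbingIdeal I.radical := by
  refine ⟨Ideal.radical_eq_top.not.2 hI.1, fun a b c ⟨n, hn⟩ => ?_⟩
  rw [mul_pow, mul_pow] at hn
  have hrad {x y : R} (h : x ^ n * y ^ n ∈ I.radical) : x * y ∈ I.radical :=
    Ideal.radical_isRadical I ⟨n, by rwa [mul_pow]⟩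
  rcases hI.2 _ _ _ hn with h | h | h
  · exact .inl (hrad (Ideal.le_radical h))
  · exact .inr (.inl (hrad h))
  · exact .inr (.inr (hrad h))

namespace IsMultiplicationModule

theorem colon_smul_top_eq_self (hM : IsMultiplicationModule R M) (N : Submodule R M) :
    (N.colon ⊤ • ⊤ : Submodule R M) = N := by
  obtain ⟨I, rfl⟩ := hM N
  exact le_antisymm (colon_smul_top_le _) (smul_mono (le_colon_smul_top I) le_rfl)

theorem mem_smul_top_of_colon_le (hM : IsMultiplicationModule R M) {I : Ideal R} {m : M}
    (h : (span R {m}).colon ⊤ ≤ I) : m ∈ (I • ⊤ : Submodule R M) :=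
  smul_mono h le_rfl <| by rw [colon_smul_top_eq_self hM]; exact mem_span_singleton_self m

theorem mem_smul_top_iff [Module.Finite R M] (hM : IsMultiplicationModule R M) {I : Ideal R}
    (hI : I.IsRadical) (hann : Module.annihilator R M ≤ I) {m : M} :
    m ∈ (I • ⊤ : Submodule R M) ↔ (span R {m}).colon ⊤ ≤ I := by
  refine ⟨fun hm => ?_, mem_smul_top_of_colon_le hM⟩
  rw [← colon_smul_top_eq (M := M) hI hann]
  exact colon_mono ((span_singleton_le_iff_mem _ _).2 hm) le_rfl

theorem smul_mem_smul_top (hM : IsMultiplicationModule R M) {I : Ideal R} {m : M} {c : R}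
    (hc : c ∈ I.colon ((span R {m}).colon ⊤ : Ideal R)) :
    c • m ∈ (I • ⊤ : Submodule R M) := by
  have hm : c • m ∈ Ideal.span {c} • (span R {m}).colon ⊤ • ⊤ :=
    smul_mem_smul (Ideal.mem_span_singleton_self c) (mem_smul_top_of_colon_le hM le_rfl)
  rw [← Submodule.mul_smul] at hm
  exact smul_mono (Ideal.span_singleton_mul_le_iff.2 (mem_colon.1 hc)) le_rfl hm

theorem isPrimeSubmodule_smul_top_s6 [Module.Finite R M] (hM : IsMultiplicationModule R M)
    {p : Ideal R} (hp : p.IsPrime) (hann : Module.annihilator R M ≤ p)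
    (hne : (p • ⊤ : Submodule R M) ≠ ⊤) : IsPrimeSubmodule (p • ⊤ : Submodule R M) := by
  refine ⟨hne, fun a m ham => or_iff_not_imp_left.2 fun hm => ?_⟩
  rw [mem_smul_top_iff hM hp.isRadical hann] at ham hm
  obtain ⟨k, hk, hkp⟩ := SetLike.not_le_iff_exists.1 hm
  have hak : a * k ∈ p := ham (mul_mem_colon_span_smul hk a)
  exact le_colon_smul_top p ((hp.mem_or_mem hak).resolve_right hkp)

theorem mRad_eq_radical_colon_smul_top [Module.Finite R M] (hM : IsMultiplicationModule R M)
    (N : Submodule R M) : mRad N = (N.colon ⊤).radical • ⊤ := by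
  refine le_antisymm (fun m hm => mem_smul_top_of_colon_le hM ?_) (le_sInf ?_)
  · rw [Ideal.radical_eq_sInf]
    refine le_sInf fun p ⟨hNp, hp⟩ => ?_
    have hann : Module.annihilator R M ≤ p := (annihilator_le_colon N).trans hNp
    rw [← mem_smul_top_iff hM hp.isRadical hann]
    by_cases hne : (p • ⊤ : Submodule R M) = ⊤
    · rw [hne]; exact mem_top
    refine mem_sInf.1 hm _ ⟨isPrimeSubmodule_smul_top_s6 hM hp hann hne, ?_⟩
    exact colon_smul_top_eq_self hM N ▸ smul_mono hNp le_rfl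
  · rintro P ⟨hP, hNP⟩
    have hrad : (N.colon ⊤).radical ≤ P.colon ⊤ :=
      hP.isPrime_colon.radical_le_iff.2 (colon_mono hNP le_rfl)
    exact (smul_mono hrad le_rfl).trans (colon_smul_top_le P)

theorem colon_mRad [Module.Finite R M] (hM : IsMultiplicationModule R M) (N : Submodule R M) :
    (mRad N).colon ⊤ = (N.colon ⊤).radical := by
  rw [mRad_eq_radical_colon_smul_top hM,
    colon_smul_top_eq (Ideal.radical_isRadical _) (annihilator_le_radical_colon N)]

theorem is2AbsorbingSubmodule_smul_top [Module.Finite R M]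
    (hM : IsMultiplicationModule R M) {Q : Ideal R} (hQ : Is2AbsorbingIdeal Q)
    (hrad : Q.IsRadical) (hann : Module.annihilator R M ≤ Q) :
    Is2AbsorbingSubmodule (Q • ⊤ : Submodule R M) := by
  have hcolon := colon_smul_top_eq (M := M) hrad hann
  refine ⟨fun h => hQ.1 (by rw [← hcolon, h, top_colon]), fun a b m habm => ?_⟩
  rw [hcolon]
  refine or_iff_not_imp_left.2 fun hab => ?_
  have habK : ∀ k ∈ (span R {m}).colon ⊤, a * b * k ∈ Q := fun k hk =>
    (mem_smul_top_iff hM hrad hann).1 habm (mul_mem_colon_span_smul hk _)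
  exact (mem_colon_or_mem_colon fun k hk => (hQ.2 a b k (habK k hk)).resolve_left hab).imp
    (smul_mem_smul_top hM) (smul_mem_smul_top hM)

end IsMultiplicationModule

theorem Is2AbsorbingPrimary.is2AbsorbingPrimaryIdeal_colon [Module.Finite R M]
    (hM : IsMultiplicationModule R M) {N : Submodule R M} (hN : Is2AbsorbingPrimary N) :
    Is2AbsorbingPrimaryIdeal (N.colon ⊤) := by
  refine ⟨colon_ne_top hN.1, fun a b c habc => or_iff_not_imp_left.2 fun hab => ?_⟩
  rw [← IsMultiplicationModule.colon_mRad hM]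
  refine mem_colon_or_mem_colon (L := ⊤) fun x _ => ?_
  rw [mul_smul, mul_smul]
  refine (hN.2 a b (c • x) ?_).imp_right (·.resolve_right hab)
  rw [smul_smul]
  exact mem_colon.1 habc x trivial

theorem stmt6 [Module.Finite R M] (hM : IsMultiplicationModule R M)
    (N : Submodule R M) (hN : Is2AbsorbingPrimary N) :
    Is2AbsorbingSubmodule (mRad N) := by
  rw [IsMultiplicationModule.mRad_eq_radical_colon_smul_top hM]
  exact IsMultiplicationModule.is2AbsorbingSubmodule_smul_top hM
    (hN.is2AbsorbingPrimaryIdeal_colon hM).is2AbsorbingIdeal_radical (Ideal.radical_isRadical _)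
    (annihilator_le_radical_colon N)
end
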